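/- Let G be the blow-up of the complement of the Fano plane with classes X_1,...,X_7, and suppose the largest class X_1 has size at least (1/7 + alpha)n where the total number of vertices is n and alpha >= 0. Then for the three pairs (x_1,x_2), (x_1,x_3), (x_1,x_4) (where x_i in X_i are chosen with the classes labeled so that X_1,X_2,X_3,X_4 pairwise have positive co-degree and the three neighborhoods N(x_1,x_2), N(x_1,x_3), N(x_1,x_4) are pairwise-disjoint-union-covering each other class twice), the sum of the three co-degrees is at most (12/7 - 2*alpha) n; consequently some pair has co-degree at most (4/7 - (2/3)*alpha) n. -/
import Mathlib


/-- The seven lines of the Fano plane on `Fin 7`. The lines through vertex `0` are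
`{0,1,2}`, `{0,3,4}`, `{0,5,6}`. -/
def fanoLines : Finset (Finset (Fin 7)) :=
  {{0, 1, 2}, {0, 3, 4}, {0, 5, 6}, {1, 3, 5}, {1, 4, 6}, {2, 3, 6}, {2, 4, 5}}

lemma pair_bound {n : ℕ} (c : Fin n → Fin 7) (G : Finset (Finset (Fin n)))
    (hG : G = Finset.univ.filter (fun e : Finset (Fin n) =>
      e.card = 3 ∧ (e.image c).card = 3 ∧ e.image c ∉ fanoLines))
    (v1 vb : Fin n) (j k : Fin 7) (hv1 : c v1 = 0) (hvb : c vb = j) (hj : j ≠ 0)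
    (hline : ({0, j, k} : Finset (Fin 7)) ∈ fanoLines) :
    (G.filter (fun e => v1 ∈ e ∧ vb ∈ e)).card ≤
      (Finset.univ.filter (fun w => c w ≠ 0 ∧ c w ≠ j ∧ c w ≠ k)).card := by
  have hne : v1 ≠ vb := by
    intro h; apply hj; rw [← hvb, ← h, hv1]
  calc (G.filter (fun e => v1 ∈ e ∧ vb ∈ e)).card
      ≤ ((Finset.univ.filter (fun w => c w ≠ 0 ∧ c w ≠ j ∧ c w ≠ k)).image
          (fun w => ({v1, vb, w} : Finset (Fin n)))).card := by
        apply Finset.card_le_card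
        intro e he
        rw [Finset.mem_filter] at he
        obtain ⟨heG, h1e, hbe⟩ := he
        rw [hG, Finset.mem_filter] at heG
        obtain ⟨-, hcard, himg, hnl⟩ := heG
        have hsd : (e \ {v1, vb}).Nonempty := by
          rw [← Finset.card_pos]
          have := Finset.le_card_sdiff ({v1, vb} : Finset (Fin n)) e
          have h2 : ({v1, vb} : Finset (Fin n)).card ≤ 2 := Finset.card_insert_le _ _ |>.trans (by simp)
          omega
        obtain ⟨w, hw⟩ := hsd
        rw [Finset.mem_sdiff, Finset.mem_insert, Finset.mem_singleton] at hw
        obtain ⟨hwe, hw12⟩ := hw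
        push_neg at hw12
        have hsub : ({v1, vb, w} : Finset (Fin n)) ⊆ e := by
          intro x hx
          simp only [Finset.mem_insert, Finset.mem_singleton] at hx
          rcases hx with rfl | rfl | rfl <;> assumption
        have hcard3 : ({v1, vb, w} : Finset (Fin n)).card = 3 := by
          rw [Finset.card_insert_of_notMem (by simp [hne, hw12.1.symm]),
            Finset.card_insert_of_notMem (by simp [hw12.2.symm]), Finset.card_singleton]
        have heq : ({v1, vb, w} : Finset (Fin n)) = e :=
          Finset.eq_of_subset_of_card_le hsub (by omega)
        have himg2 : e.image c = {0, j, c w} := by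
          rw [← heq]; simp [Finset.image_insert, hv1, hvb]
        have hcw0 : c w ≠ 0 := by
          intro h; rw [himg2, h] at himg
          have : ({0, j, 0} : Finset (Fin 7)).card ≤ 2 := by
            rw [show ({0, j, 0} : Finset (Fin 7)) = {0, j} by ext x; simp only [Finset.mem_insert, Finset.mem_singleton]; tauto]
            exact Finset.card_insert_le _ _ |>.trans (by simp)
          omega
        have hcwj : c w ≠ j := by
          intro h; rw [himg2, h] at himg
          have : ({0, j, j} : Finset (Fin 7)).card ≤ 2 := by
            rw [show ({0, j, j} : Finset (Fin 7)) = {0, j} by ext x; simp only [Finset.mem_insert, Finset.mem_singleton]; tauto]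
            exact Finset.card_insert_le _ _ |>.trans (by simp)
          omega
        have hcwk : c w ≠ k := by
          intro h; rw [himg2, h] at hnl; exact hnl hline
        rw [Finset.mem_image]
        exact ⟨w, Finset.mem_filter.2 ⟨Finset.mem_univ _, hcw0, hcwj, hcwk⟩, heq⟩
    _ ≤ _ := Finset.card_image_le
/-- Let `G` be a blow-up of the complement of the Fano plane on `n`
vertices with classes `X_i = c⁻¹(i)`, where the largest class `X_0` has size at
least `(1/7 + α)n` with `α ≥ 0`. Pick `v1 ∈ X_0`, and `v2, v3, v4` in the classes
`1, 3, 5` (so that the three Fano lines through class `0` are `{0,1,2}`, `{0,3,4}`,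
`{0,5,6}`, and the neighborhoods `N(v1,v2)`, `N(v1,v3)`, `N(v1,v4)` cover each other
class twice and avoid `X_0`). Then the sum of the three co-degrees is at most
`(12/7 - 2α)n`, and consequently some pair has co-degree at most `(4/7 - (2/3)α)n`. -/
theorem stmt_17 (n : ℕ) (α : ℝ) (hα : 0 ≤ α)
    (c : Fin n → Fin 7)
    (G : Finset (Finset (Fin n)))
    (hG : G = Finset.univ.filter (fun e : Finset (Fin n) =>
      e.card = 3 ∧ (e.image c).card = 3 ∧ e.image c ∉ fanoLines))
    (hlargest : ∀ i : Fin 7, (Finset.univ.filter (fun v => c v = i)).card ≤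
      (Finset.univ.filter (fun v => c v = 0)).card)
    (hbig : ((1 : ℝ) / 7 + α) * n ≤ ((Finset.univ.filter (fun v => c v = 0)).card : ℝ))
    (v1 v2 v3 v4 : Fin n)
    (hv1 : c v1 = 0) (hv2 : c v2 = 1) (hv3 : c v3 = 3) (hv4 : c v4 = 5) :
    (((G.filter (fun e => v1 ∈ e ∧ v2 ∈ e)).card : ℝ) +
      ((G.filter (fun e => v1 ∈ e ∧ v3 ∈ e)).card : ℝ) +
      ((G.filter (fun e => v1 ∈ e ∧ v4 ∈ e)).card : ℝ) ≤ (12 / 7 - 2 * α) * n) ∧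
    (((G.filter (fun e => v1 ∈ e ∧ v2 ∈ e)).card : ℝ) ≤ (4 / 7 - (2 / 3) * α) * n ∨
      ((G.filter (fun e => v1 ∈ e ∧ v3 ∈ e)).card : ℝ) ≤ (4 / 7 - (2 / 3) * α) * n ∨
      ((G.filter (fun e => v1 ∈ e ∧ v4 ∈ e)).card : ℝ) ≤ (4 / 7 - (2 / 3) * α) * n) := by
  have hb2 := pair_bound c G hG v1 v2 1 2 hv1 hv2 (by decide)
    (by simp [fanoLines])
  have hb3 := pair_bound c G hG v1 v3 3 4 hv1 hv3 (by decide)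
    (by simp [fanoLines])
  have hb4 := pair_bound c G hG v1 v4 5 6 hv1 hv4 (by decide)
    (by simp [fanoLines])
  -- double counting
  have hdc : (Finset.univ.filter (fun w => c w ≠ 0 ∧ c w ≠ 1 ∧ c w ≠ 2)).card +
      (Finset.univ.filter (fun w => c w ≠ 0 ∧ c w ≠ 3 ∧ c w ≠ 4)).card +
      (Finset.univ.filter (fun w => c w ≠ 0 ∧ c w ≠ 5 ∧ c w ≠ 6)).card ≤
      2 * (Finset.univ.filter (fun w : Fin n => ¬ c w = 0)).card := by
    simp only [Finset.card_filter]
    rw [← Finset.sum_add_distrib, ← Finset.sum_add_distrib, Finset.mul_sum]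
    apply Finset.sum_le_sum
    intro w _
    have : ∀ x : Fin 7,
        ((if x ≠ 0 ∧ x ≠ 1 ∧ x ≠ 2 then 1 else 0) +
          (if x ≠ 0 ∧ x ≠ 3 ∧ x ≠ 4 then 1 else 0) +
          (if x ≠ 0 ∧ x ≠ 5 ∧ x ≠ 6 then 1 else 0) : ℕ) ≤
          2 * (if ¬ x = 0 then 1 else 0) := by decide
    exact this (c w)
  have hpart := Finset.card_filter_add_card_filter_not
    (s := (Finset.univ : Finset (Fin n))) (p := fun v => c v = 0)
  rw [Finset.card_univ, Fintype.card_fin] at hpart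
  set X0 := (Finset.univ.filter (fun v => c v = 0)).card with hX0
  set A := (G.filter (fun e => v1 ∈ e ∧ v2 ∈ e)).card
  set B := (G.filter (fun e => v1 ∈ e ∧ v3 ∈ e)).card
  set C := (G.filter (fun e => v1 ∈ e ∧ v4 ∈ e)).card
  have hnat : A + B + C ≤ 2 * (n - X0) := by omega
  have hX0n : X0 ≤ n := by omega
  have hcast : (A : ℝ) + B + C ≤ 2 * ((n : ℝ) - X0) := by
    have := (Nat.cast_le (α := ℝ)).2 hnat
    push_cast [Nat.cast_sub hX0n] at this
    linarith
  have hmain : (A : ℝ) + B + C ≤ (12 / 7 - 2 * α) * n := by nlinarith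
  refine ⟨hmain, ?_⟩
  by_contra h
  push_neg at h
  obtain ⟨h1, h2, h3⟩ := h
  linarith
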